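/- arXiv:1302.0810 — 4 statements merged into one kernel-verified Lean document; each statement's English description precedes it below -/
import Mathlib

section
/- For each 0 ≤ i ≤ d−2, the expression P_{c,a}(c_i), viewed as a polynomial in the variables (c_1,…,c_{d-2},a) with rational coefficients, is homogeneous of degree d; moreover the d−1 polynomials P_{c,a}(c_0), P_{c,a}(c_1), …, P_{c,a}(c_{d-2}) have no common zero in ℂ^{d-1} other than the origin (0,…,0). -/
open MvPolynomial

noncomputable section

/-- Here `d = N + 2`.  The parameter space has coordinates `c_1, …, c_{d-2}, a`, encoded as the
variables `Fin (N+1)`: for `i : Fin N`, `X i.castSucc` is `c_{i+1}`, and `X (Fin.last N)` is `a`.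
This is the elementary (monic) symmetric polynomial `σ_k(c_1, …, c_{d-2})`. -/
def esymmMv (N k : ℕ) : MvPolynomial (Fin (N + 1)) ℚ :=
  ∑ s ∈ Finset.powersetCard k (Finset.univ : Finset (Fin N)), ∏ i ∈ s, X i.castSucc

/-- The critical point `c_i` (for `0 ≤ i ≤ d-2`), as a polynomial in `(c, a)`:
`c_0 = 0` and `c_i = X_{i-1}` for `i ≥ 1`. -/
def critMv (N : ℕ) (i : Fin (N + 1)) : MvPolynomial (Fin (N + 1)) ℚ :=
  if h : (i : ℕ) = 0 then 0
  else X (Fin.castSucc ⟨(i : ℕ) - 1, by have := i.isLt; omega⟩)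

/-- `P_{c,a}(z) = (1/d) z^d + ∑_{j=2}^{d-1} (-1)^{d-j} σ_{d-j}(c) z^j / j + a^d`, applied to a
polynomial `z` in the parameters, with `d = N + 2`. -/
def PMv (N : ℕ) (z : MvPolynomial (Fin (N + 1)) ℚ) : MvPolynomial (Fin (N + 1)) ℚ :=
  C (1 / ((N : ℚ) + 2)) * z ^ (N + 2)
    + ∑ j ∈ Finset.Icc 2 (N + 1),
        C ((-1 : ℚ) ^ (N + 2 - j) / (j : ℚ)) * esymmMv N (N + 2 - j) * z ^ j
    + (X (Fin.last N)) ^ (N + 2)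

/-
Each `P_{c,a}(c_i)` is homogeneous because `σ_k(c)` has degree `k`, so `σ_{d-j}(c) z^j` has degree
`d` when `z` has degree 1.

For the common zeros, `c_0 = 0` gives `P(0) = a^d = 0`. Over `ℂ`, `P' = z ∏ᵢ (z - cᵢ)`, and at every
critical point that is also a root of `P`, the multiplicity as a root of `P` is one more than as
a root of `P'`. So `P` has at least `(d - 1) + #{distinct critical points}` roots, while it has
degree `d`. Hence all critical points coincide with `c_0 = 0`.
-/

namespace Polynomial

theorem roots_derivative_add_dedup_le_roots {K : Type*} [Field K] [CharZero K]
    [DecidableEq K] {p : K[X]} (hp : p ≠ 0) (h : ∀ s ∈ p.derivative.roots, p.IsRoot s) :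
    p.derivative.roots + p.derivative.roots.dedup ≤ p.roots := by
  refine Multiset.le_iff_count.mpr fun s => ?_
  rw [Multiset.count_add, Multiset.count_dedup]
  split_ifs with hs
  · have hroot := h s hs
    rw [count_roots, count_roots, derivative_rootMultiplicity_of_root hroot]
    have := (rootMultiplicity_pos hp).mpr hroot
    omega
  · rw [Multiset.count_eq_zero.mpr hs]
    exact Nat.zero_le _

theorem eq_of_mem_roots_derivative_of_forall_isRoot {K : Type*} [Field K]
    [IsAlgClosed K] [CharZero K] {p : K[X]} (h : ∀ s ∈ p.derivative.roots, p.IsRoot s)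
    {s t : K} (hs : s ∈ p.derivative.roots) (ht : t ∈ p.derivative.roots) : s = t := by
  classical
  have hp : p ≠ 0 := fun hp => by simp [hp] at hs
  have hle := Multiset.card_le_card (roots_derivative_add_dedup_le_roots hp h)
  have hdeg : p.derivative.natDegree + 1 = p.natDegree := by
    have : p.natDegree ≠ 0 := fun h0 => ne_zero_of_mem_roots hs (derivative_of_natDegree_zero h0)
    rw [natDegree_derivative]
    omega
  rw [Multiset.card_add, IsAlgClosed.card_roots_eq_natDegree,
    IsAlgClosed.card_roots_eq_natDegree] at hle
  have hcard : p.derivative.roots.toFinset.card ≤ 1 := by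
    rw [Multiset.card_toFinset]; omega
  exact Finset.card_le_one.mp hcard s (Multiset.mem_toFinset.mpr hs) t
    (Multiset.mem_toFinset.mpr ht)

/-- `P_{c,a} = paramPoly (d - 2) {c_1, …, c_{d-2}} (a ^ d)`, reindexed by `k = d - j`. -/
def paramPoly {K : Type*} [Field K] (n : ℕ) (s : Multiset K) (b : K) : K[X] :=
  ∑ k ∈ Finset.range (n + 1), C ((-1) ^ k * s.esymm k / (n + 2 - k : ℕ)) * X ^ (n + 2 - k) + C b

theorem derivative_paramPoly {K : Type*} [Field K] [CharZero K] {n : ℕ} {s : Multiset K}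
    (hs : Multiset.card s = n) (b : K) :
    derivative (paramPoly n s b) = X * (s.map fun t => X - C t).prod := by
  subst hs
  rw [Multiset.prod_X_sub_X_eq_sum_esymm, Finset.mul_sum, paramPoly, derivative_add,
    derivative_C, add_zero, derivative_sum]
  refine Finset.sum_congr rfl fun k hk => ?_
  have hk : k ≤ Multiset.card s := Nat.lt_succ_iff.mp (Finset.mem_range.mp hk)
  have hcast : ((Multiset.card s + 2 - k : ℕ) : K) ≠ 0 := Nat.cast_ne_zero.mpr (by omega)
  rw [derivative_C_mul_X_pow, div_mul_cancel₀ _ hcast,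
    show Multiset.card s + 2 - k - 1 = (Multiset.card s - k) + 1 by omega, pow_succ]
  simp only [map_mul, map_pow, map_neg, map_one]
  ring

theorem roots_derivative_paramPoly {K : Type*} [Field K] [CharZero K] {n : ℕ} {s : Multiset K}
    (hs : Multiset.card s = n) (b : K) : (derivative (paramPoly n s b)).roots = 0 ::ₘ s := by
  have hmonic : (X * (s.map fun t => X - C t).prod).Monic :=
    monic_X.mul (monic_multiset_prod_of_monic _ _ fun t _ => monic_X_sub_C t)
  rw [derivative_paramPoly hs, roots_mul hmonic.ne_zero, roots_X, roots_multiset_prod_X_sub_C,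
    Multiset.singleton_add]

end Polynomial

theorem aeval_PMv {K : Type*} [Field K] [CharZero K] (N : ℕ) (x : Fin (N + 1) → K)
    (z : MvPolynomial (Fin (N + 1)) ℚ) :
    aeval x (PMv N z) = (Polynomial.paramPoly N (Finset.univ.val.map (x ∘ Fin.castSucc))
      (x (Fin.last N) ^ (N + 2))).eval (aeval x z) := by
  have he (k : ℕ) :
      aeval x (esymmMv N k) = (Finset.univ.val.map (x ∘ Fin.castSucc)).esymm k := by
    simp only [esymmMv, map_sum, map_prod, aeval_X, Finset.esymm_map_val, Function.comp_apply]
  simp only [PMv, Polynomial.paramPoly, map_add, map_mul, map_pow, map_sum, he, aeval_C, aeval_X,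
    Polynomial.eval_add, Polynomial.eval_finsetSum, Polynomial.eval_mul, Polynomial.eval_C,
    Polynomial.eval_pow, Polynomial.eval_X]
  rw [Finset.range_eq_Ico, Finset.sum_eq_sum_Ico_succ_bot (by omega)]
  congr 2
  · simp [Multiset.esymm, Multiset.powersetCard_zero_left]
  · refine Finset.sum_nbij' (fun j => N + 2 - j) (fun k => N + 2 - k) ?_ ?_ ?_ ?_ ?_ <;>
      intro j hj <;> simp only [Finset.mem_Icc, Finset.mem_Ico] at hj ⊢
    any_goals omega
    rw [Nat.sub_sub_self (by omega : j ≤ N + 2)]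
    simp only [map_div₀, map_pow, map_neg, map_one, map_natCast]
    ring

theorem isHomogeneous_esymmMv (N k : ℕ) : (esymmMv N k).IsHomogeneous k := by
  refine IsHomogeneous.sum _ _ _ fun s hs => ?_
  simpa [(Finset.mem_powersetCard.mp hs).2] using
    IsHomogeneous.prod s (fun i : Fin N => (X i.castSucc : MvPolynomial (Fin (N + 1)) ℚ))
      (fun _ => 1) fun i _ => isHomogeneous_X _ _

theorem isHomogeneous_critMv (N : ℕ) (i : Fin (N + 1)) : (critMv N i).IsHomogeneous 1 := by
  unfold critMv
  split
  · exact isHomogeneous_zero _ _ _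
  · exact isHomogeneous_X _ _

theorem isHomogeneous_PMv (N : ℕ) {z : MvPolynomial (Fin (N + 1)) ℚ} (hz : z.IsHomogeneous 1) :
    (PMv N z).IsHomogeneous (N + 2) := by
  refine ((IsHomogeneous.add ?_ ?_).add ?_)
  · simpa using (hz.pow (N + 2)).C_mul _
  · refine IsHomogeneous.sum _ _ _ fun j hj => ?_
    have hdeg : (N + 2 - j) + 1 * j = N + 2 := by have := Finset.mem_Icc.mp hj; omega
    simpa only [mul_assoc, hdeg] using
      ((isHomogeneous_esymmMv N (N + 2 - j)).mul (hz.pow j)).C_mul _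
  · simpa using (isHomogeneous_X ℚ (Fin.last N)).pow (N + 2)

theorem critMv_zero (N : ℕ) : critMv N 0 = 0 := by
  simp [critMv]

theorem critMv_succ (N : ℕ) (i : Fin N) : critMv N i.succ = X i.castSucc := by
  simp [critMv]

theorem PMv_zero (N : ℕ) : PMv N 0 = X (Fin.last N) ^ (N + 2) := by
  have hsum : ∑ j ∈ Finset.Icc 2 (N + 1),
      C ((-1 : ℚ) ^ (N + 2 - j) / j) * esymmMv N (N + 2 - j) * (0 : MvPolynomial _ ℚ) ^ j = 0 :=
    Finset.sum_eq_zero fun j hj => by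
      rw [zero_pow (by have := Finset.mem_Icc.mp hj; omega), mul_zero]
  simp [PMv, hsum]

/-- each `P_{c,a}(c_i)`, viewed as a polynomial in `(c_1, …, c_{d-2}, a)` with
rational coefficients, is homogeneous of degree `d`, and the `d-1` polynomials
`P_{c,a}(c_0), …, P_{c,a}(c_{d-2})` have no common zero in `ℂ^{d-1}` other than the origin. -/
theorem statement0 (N : ℕ) (i : Fin (N + 1)) :
    (PMv N (critMv N i)).IsHomogeneous (N + 2) ∧
    ∀ x : Fin (N + 1) → ℂ,
      (∀ j : Fin (N + 1), MvPolynomial.aeval x (PMv N (critMv N j)) = 0) → x = 0 := by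
  refine ⟨isHomogeneous_PMv N (isHomogeneous_critMv N i), fun x h => ?_⟩
  have ha : x (Fin.last N) = 0 := by
    have h0 := h 0
    rw [critMv_zero, PMv_zero, map_pow, aeval_X] at h0
    exact pow_eq_zero_iff (by omega) |>.mp h0
  set c := Finset.univ.val.map (x ∘ Fin.castSucc)
  set q := Polynomial.paramPoly N c (x (Fin.last N) ^ (N + 2))
  have hq (z : MvPolynomial (Fin (N + 1)) ℚ) : q.eval (aeval x z) = aeval x (PMv N z) :=
    (aeval_PMv N x z).symm
  have hroots : q.derivative.roots = 0 ::ₘ c :=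
    Polynomial.roots_derivative_paramPoly (by simp [c]) _
  have hcrit : ∀ s ∈ q.derivative.roots, q.IsRoot s := by
    rw [hroots]
    rintro s hs
    rcases Multiset.mem_cons.mp hs with rfl | hs
    · simpa [Polynomial.IsRoot, critMv_zero] using (hq _).trans (h 0)
    · obtain ⟨j, -, rfl⟩ := Multiset.mem_map.mp hs
      simpa [Polynomial.IsRoot, critMv_succ] using (hq _).trans (h j.succ)
  funext j
  refine Fin.lastCases ha (fun j => ?_) j
  exact Polynomial.eq_of_mem_roots_derivative_of_forall_isRoot hcrit
    (by simp [hroots, c]) (by simp [hroots])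
end
end

section
/- For every (c,a) ∈ K^{d-1} and every z ∈ K one has both: (i) d^{-1}·h_{c,a,v}(P_{c,a}(z)) ≥ h_{c,a,v}(z) + min{ (1/d)·log(|d|_v^{-1}), (1/d − 1)·log C̃_v(c,a) }, and (ii) d^{-1}·h_{c,a,v}(P_{c,a}(z)) ≤ h_{c,a,v}(z) + (1/d)·log α_v. -/
/-!
Put `M = max{C̃_v(c,a), |z|_v}`. The constant `C_v` is built so that every coefficient of
`P_{c,a}`, and `a^d`, is bounded by the matching power of `C̃_v` (up to `|d|_v` and `|j|_v`).
So by the ultrametric inequality each monomial of `P_{c,a}(z)` has size at most `α_v M^d`, and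
this gives (ii). For (i): if `|z|_v ≤ C̃_v`, then `h(z) = log C̃_v ≤ h(P(z))`. If `|z|_v > C̃_v`,
the leading term `z^d/d` strictly dominates the others, so `|P(z)|_v = |z|_v^d / |d|_v`.
-/

open Filter

noncomputable section

variable {K : Type*} [Field K]

/-- Elementary symmetric polynomial of degree `k` evaluated at `c = (c_1, …, c_{d-2})`. -/
def esymmK {n : ℕ} (c : Fin n → K) (k : ℕ) : K :=
  ∑ s ∈ Finset.powersetCard k (Finset.univ : Finset (Fin n)), ∏ i ∈ s, c i

/-- The polynomial `P_{c,a}` of degree `d = n + 2`: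
`P_{c,a}(z) = z^d/d + ∑_{j=2}^{d-1} (-1)^{d-j} σ_{d-j}(c) z^j / j + a^d`. -/
def Pca {n : ℕ} (c : Fin n → K) (a z : K) : K :=
  z ^ (n + 2) / ((n + 2 : ℕ) : K)
    + ∑ j ∈ Finset.Icc 2 (n + 1),
        ((-1 : K) ^ (n + 2 - j) * esymmK c (n + 2 - j) * z ^ j) / ((j : ℕ) : K)
    + a ^ (n + 2)

/-- The critical points `c_0 = 0, c_1, …, c_{d-2}` of `P_{c,a}`. -/
def crit {n : ℕ} (c : Fin n → K) (i : Fin (n + 1)) : K :=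
  if h : (i : ℕ) = 0 then 0 else c ⟨(i : ℕ) - 1, by have := i.isLt; omega⟩

/-- `|c|_v = max_{1 ≤ i ≤ d-2} |c_i|_v` (with value `0` when there are no `c_i`'s). -/
def cnorm {n : ℕ} (v : AbsoluteValue K ℝ) (c : Fin n → K) : ℝ :=
  Finset.fold max 0 (fun i => v (c i)) (Finset.univ : Finset (Fin n))

/-- `α_v = max_{1 ≤ j ≤ d} |j|_v⁻¹`. -/
def alphaV (v : AbsoluteValue K ℝ) (d : ℕ) : ℝ :=
  Finset.fold max 0 (fun j : ℕ => (v ((j : ℕ) : K))⁻¹) (Finset.Icc 1 d)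

/-- `C_v(c,a) = max{ |d|_v^{1/(d-1)}, |d|_v^{1/d}·|a|_v,
max_{2≤j≤d-1} (|σ_{d-j}(c)|_v · |d/j|_v)^{1/(d-j)} }`, with `d = n + 2`. -/
def Cv {n : ℕ} (v : AbsoluteValue K ℝ) (c : Fin n → K) (a : K) : ℝ :=
  max ((v (((n + 2 : ℕ) : K))) ^ ((1 : ℝ) / ((n : ℝ) + 1)))
    (max ((v (((n + 2 : ℕ) : K))) ^ ((1 : ℝ) / ((n : ℝ) + 2)) * v a)
      (Finset.fold max 0
        (fun j : ℕ =>
          (v (esymmK c (n + 2 - j)) * v (((n + 2 : ℕ) : K) / ((j : ℕ) : K)))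
            ^ ((1 : ℝ) / ((n + 2 - j : ℕ) : ℝ)))
        (Finset.Icc 2 (n + 1))))

/-- `C̃_v(c,a) = max{ |a|_v, |c|_v, C_v(c,a) }`. -/
def Ctilde {n : ℕ} (v : AbsoluteValue K ℝ) (c : Fin n → K) (a : K) : ℝ :=
  max (v a) (max (cnorm v c) (Cv v c a))

/-- `h_{c,a,v}(z) = log max{ C̃_v(c,a), |z|_v }`. -/
def hca {n : ℕ} (v : AbsoluteValue K ℝ) (c : Fin n → K) (a : K) (z : K) : ℝ :=
  Real.log (max (Ctilde v c a) (v z))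

/-- `log⁺ = max{0, log}`. -/
def logPlus (x : ℝ) : ℝ := max 0 (Real.log x)

/-- `U_i(ε, C) = {(c,a) : max{|c|_v,|a|_v} ≥ C and |P_{c,a}(c_i)|_v ≥ ε·max{|c|_v,|a|_v}^d}`. -/
def Uset {n : ℕ} (v : AbsoluteValue K ℝ) (i : Fin (n + 1)) (ε C : ℝ) :
    Set ((Fin n → K) × K) :=
  {p | C ≤ max (cnorm v p.1) (v p.2) ∧
       ε * max (cnorm v p.1) (v p.2) ^ (n + 2) ≤ v (Pca p.1 p.2 (crit p.1 i))}

open Finset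

lemma IsNonarchimedean.abv_sum_le {v : AbsoluteValue K ℝ} (hv : IsNonarchimedean v)
    {ι : Type*} {s : Finset ι} {f : ι → K} {B : ℝ} (hB : 0 ≤ B) (h : ∀ i ∈ s, v (f i) ≤ B) :
    v (∑ i ∈ s, f i) ≤ B :=
  hv.apply_sum_le.trans (Real.iSup_le (fun i => h i i.2) hB)

lemma le_pow_of_rpow_one_div_le {x C : ℝ} {k : ℕ} (hx : 0 ≤ x) (hC : 0 ≤ C) (hk : k ≠ 0)
    (h : x ^ (1 / (k : ℝ)) ≤ C) : x ≤ C ^ k := by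
  rwa [one_div, Real.rpow_inv_le_iff_of_pos hx hC (by positivity), Real.rpow_natCast] at h

lemma pow_mul_pow_le_mul_pow {x y : ℝ} (hx : 0 ≤ x) (hxy : x ≤ y) {k j : ℕ} (hk : k ≠ 0) :
    x ^ k * y ^ j ≤ x * y ^ (k - 1 + j) := by
  obtain ⟨k, rfl⟩ := Nat.exists_eq_succ_of_ne_zero hk
  have hy : 0 ≤ y := hx.trans hxy
  rw [Nat.succ_sub_one, pow_add, pow_succ', mul_assoc]
  gcongr

lemma abv_esymmK_le {n : ℕ} {v : AbsoluteValue K ℝ} (hv : IsNonarchimedean v) {c : Fin n → K}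
    {B : ℝ} (hB : 0 ≤ B) (hc : ∀ i, v (c i) ≤ B) (k : ℕ) : v (esymmK c k) ≤ B ^ k := by
  refine hv.abv_sum_le (pow_nonneg hB k) fun s hs => ?_
  rw [mem_powersetCard] at hs
  calc v (∏ i ∈ s, c i) = ∏ i ∈ s, v (c i) := map_prod v _ s
    _ ≤ ∏ _i ∈ s, B := prod_le_prod (fun i _ => v.nonneg _) (fun i _ => hc i)
    _ = B ^ k := by rw [prod_const, hs.2]

lemma inv_abv_le_alphaV (v : AbsoluteValue K ℝ) {d j : ℕ} (hj : j ∈ Icc 1 d) :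
    (v (j : K))⁻¹ ≤ alphaV v d :=
  (le_fold_max _).mpr (Or.inr ⟨j, hj, le_rfl⟩)

lemma one_le_alphaV (v : AbsoluteValue K ℝ) {d : ℕ} (hd : 1 ≤ d) : 1 ≤ alphaV v d := by
  simpa using inv_abv_le_alphaV v (j := 1) (by simp [hd])

section Ctilde

variable {n : ℕ} (v : AbsoluteValue K ℝ) (c : Fin n → K) (a : K)

lemma abv_le_Ctilde : v a ≤ Ctilde v c a := le_max_left _ _

lemma Cv_le_Ctilde : Cv v c a ≤ Ctilde v c a := (le_max_right _ _).trans (le_max_right _ _)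

lemma abv_apply_le_cnorm (i : Fin n) : v (c i) ≤ cnorm v c :=
  (le_fold_max _).mpr (Or.inr ⟨i, mem_univ i, le_rfl⟩)

lemma abv_apply_le_Ctilde (i : Fin n) : v (c i) ≤ Ctilde v c a :=
  (abv_apply_le_cnorm v c i).trans ((le_max_left _ _).trans (le_max_right _ _))

lemma abv_deg_mul_pow_le : v ((n + 2 : ℕ) : K) * v a ^ (n + 2) ≤ Ctilde v c a ^ (n + 2) := by
  have h : v ((n + 2 : ℕ) : K) ^ (1 / ((n + 2 : ℕ) : ℝ)) * v a ≤ Ctilde v c a := by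
    exact_mod_cast ((le_max_left _ _).trans (le_max_right _ _)).trans (Cv_le_Ctilde v c a)
  have := pow_le_pow_left₀ (by positivity) h (n + 2)
  rwa [mul_pow, ← Real.rpow_natCast (_ ^ _), ← Real.rpow_mul (v.nonneg _),
    one_div_mul_cancel (by positivity), Real.rpow_one] at this

variable [CharZero K]

lemma abv_natCast_pos {j : ℕ} (hj : j ≠ 0) : 0 < v (j : K) := v.pos (Nat.cast_ne_zero.mpr hj)

lemma Ctilde_pos : 0 < Ctilde v c a :=
  (Real.rpow_pos_of_pos (abv_natCast_pos v (by omega : n + 2 ≠ 0)) _).trans_le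
    ((le_max_left _ _).trans (Cv_le_Ctilde v c a))

lemma abv_deg_le_Ctilde_pow : v ((n + 2 : ℕ) : K) ≤ Ctilde v c a ^ (n + 1) := by
  refine le_pow_of_rpow_one_div_le (v.nonneg _) (Ctilde_pos v c a).le n.succ_ne_zero ?_
  exact_mod_cast (le_max_left _ _).trans (Cv_le_Ctilde v c a)

lemma abv_esymmK_mul_le {j : ℕ} (hj : j ∈ Icc 2 (n + 1)) :
    v (esymmK c (n + 2 - j)) * v (((n + 2 : ℕ) : K) / (j : K)) ≤ Ctilde v c a ^ (n + 2 - j) := by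
  have hj' := mem_Icc.mp hj
  refine le_pow_of_rpow_one_div_le (by positivity) (Ctilde_pos v c a).le (by omega) ?_
  exact ((le_fold_max _).mpr (Or.inr ⟨j, hj, le_rfl⟩)).trans
    (((le_max_right _ _).trans (le_max_right _ _)).trans (Cv_le_Ctilde v c a))

end Ctilde

section Pca

variable {n : ℕ} {v : AbsoluteValue K ℝ} (c : Fin n → K) (a z : K)

lemma abv_Pca_term (j : ℕ) :
    v (((-1 : K) ^ (n + 2 - j) * esymmK c (n + 2 - j) * z ^ j) / (j : K)) =
      v (esymmK c (n + 2 - j)) * v z ^ j / v (j : K) := by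
  simp only [map_div₀, map_mul, map_pow, map_neg_eq_map, map_one, one_pow, one_mul]

variable [CharZero K]

lemma abv_Pca_le (hv : IsNonarchimedean v) :
    v (Pca c a z) ≤ max (Ctilde v c a) (v z) ^ (n + 2) * alphaV v (n + 2) := by
  set Ct := Ctilde v c a
  set M := max Ct (v z)
  have hCt : 0 ≤ Ct := (Ctilde_pos v c a).le
  have hCtM : Ct ≤ M := le_max_left _ _
  have hzM : v z ≤ M := le_max_right _ _
  have hM : 0 ≤ M := hCt.trans hCtM
  have hA : 1 ≤ alphaV v (n + 2) := one_le_alphaV v (by omega)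
  refine (hv _ _).trans (max_le ((hv _ _).trans (max_le ?_ ?_)) ?_)
  · rw [map_div₀, map_pow, div_eq_mul_inv]
    gcongr
    exact inv_abv_le_alphaV v (by simp)
  · refine hv.abv_sum_le (mul_nonneg (pow_nonneg hM _) (zero_le_one.trans hA)) fun j hj => ?_
    have hj' := mem_Icc.mp hj
    rw [abv_Pca_term, div_eq_mul_inv]
    calc v (esymmK c (n + 2 - j)) * v z ^ j * (v (j : K))⁻¹
        ≤ M ^ (n + 2 - j) * M ^ j * alphaV v (n + 2) := by
          gcongr
          · exact (abv_esymmK_le hv hCt (abv_apply_le_Ctilde v c a) _).trans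
              (pow_le_pow_left₀ hCt hCtM _)
          · exact inv_abv_le_alphaV v (mem_Icc.mpr ⟨by omega, by omega⟩)
      _ = M ^ (n + 2) * alphaV v (n + 2) := by rw [← pow_add, Nat.sub_add_cancel (by omega)]
  · rw [map_pow]
    calc v a ^ (n + 2) ≤ M ^ (n + 2) :=
          pow_le_pow_left₀ (v.nonneg a) ((abv_le_Ctilde v c a).trans hCtM) _
      _ ≤ M ^ (n + 2) * alphaV v (n + 2) :=
          le_mul_of_one_le_right (pow_nonneg hM _) hA

lemma max_Ctilde_abv_Pca_le (hv : IsNonarchimedean v) :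
    max (Ctilde v c a) (v (Pca c a z)) ≤ max (Ctilde v c a) (v z) ^ (n + 2) * alphaV v (n + 2) := by
  refine max_le ?_ (abv_Pca_le c a z hv)
  have hD := abv_natCast_pos v (by omega : n + 2 ≠ 0)
  have hCt := Ctilde_pos v c a
  calc Ctilde v c a = Ctilde v c a * v ((n + 2 : ℕ) : K) * (v ((n + 2 : ℕ) : K))⁻¹ := by
        field_simp
    _ ≤ Ctilde v c a * Ctilde v c a ^ (n + 1) * alphaV v (n + 2) := by
        gcongr
        · exact abv_deg_le_Ctilde_pow v c a
        · exact inv_abv_le_alphaV v (by simp)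
    _ = Ctilde v c a ^ (n + 2) * alphaV v (n + 2) := by ring
    _ ≤ max (Ctilde v c a) (v z) ^ (n + 2) * alphaV v (n + 2) :=
        mul_le_mul_of_nonneg_right (pow_le_pow_left₀ hCt.le (le_max_left _ _) _)
          (zero_le_one.trans (one_le_alphaV v (by omega)))

lemma abv_Pca_of_Ctilde_lt (hv : IsNonarchimedean v) (hz : Ctilde v c a < v z) :
    v (Pca c a z) = v z ^ (n + 2) / v ((n + 2 : ℕ) : K) := by
  set Ct := Ctilde v c a
  set D := v ((n + 2 : ℕ) : K)
  have hD : 0 < D := abv_natCast_pos v (by omega)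
  have hCt : 0 ≤ Ct := (Ctilde_pos v c a).le
  have hz0 : 0 ≤ v z := hCt.trans hz.le
  set B := Ct * v z ^ (n + 1) / D
  have hB : B < v z ^ (n + 2) / D := by
    rw [pow_succ' (v z) (n + 1)]
    exact div_lt_div_of_pos_right (mul_lt_mul_of_pos_right hz (pow_pos (hCt.trans_lt hz) _)) hD
  have hsum : v (∑ j ∈ Icc 2 (n + 1),
      ((-1 : K) ^ (n + 2 - j) * esymmK c (n + 2 - j) * z ^ j) / (j : K)) ≤ B := by
    refine hv.abv_sum_le (by positivity) fun j hj => ?_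
    have hj' := mem_Icc.mp hj
    have hvj := abv_natCast_pos v (by omega : j ≠ 0)
    rw [abv_Pca_term]
    calc v (esymmK c (n + 2 - j)) * v z ^ j / v (j : K)
        = v (esymmK c (n + 2 - j)) * v (((n + 2 : ℕ) : K) / (j : K)) * v z ^ j / D := by
          rw [map_div₀]; field_simp; rfl
      _ ≤ Ct ^ (n + 2 - j) * v z ^ j / D := by
          gcongr
          exact abv_esymmK_mul_le v c a hj
      _ ≤ Ct * v z ^ (n + 2 - j - 1 + j) / D := div_le_div_of_nonneg_right
          (pow_mul_pow_le_mul_pow hCt hz.le (by omega : n + 2 - j ≠ 0)) hD.le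
      _ = B := by rw [show n + 2 - j - 1 + j = n + 1 by omega]
  have ha : v (a ^ (n + 2)) ≤ B := by
    calc v (a ^ (n + 2)) = D * v a ^ (n + 2) / D := by rw [map_pow]; field_simp
      _ ≤ Ct ^ (n + 2) * v z ^ 0 / D := by
          rw [pow_zero, mul_one]
          gcongr
          exact abv_deg_mul_pow_le v c a
      _ ≤ B := div_le_div_of_nonneg_right
          (pow_mul_pow_le_mul_pow hCt hz.le (by omega : n + 2 ≠ 0)) hD.le
  have hrest : v ((∑ j ∈ Icc 2 (n + 1),
      ((-1 : K) ^ (n + 2 - j) * esymmK c (n + 2 - j) * z ^ j) / (j : K)) + a ^ (n + 2)) <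
      v (z ^ (n + 2) / ((n + 2 : ℕ) : K)) := by
    rw [map_div₀, map_pow]
    exact ((hv _ _).trans (max_le hsum ha)).trans_lt hB
  rw [Pca, add_assoc, hv.add_eq_left_of_lt hrest, map_div₀, map_pow]

end Pca

section Height

open Real

variable [CharZero K] {n : ℕ} {v : AbsoluteValue K ℝ} (c : Fin n → K) (a z : K)

lemma hca_Pca_le (hv : IsNonarchimedean v) :
    hca v c a (Pca c a z) ≤ (n + 2) * hca v c a z + log (alphaV v (n + 2)) := by
  have hCt := Ctilde_pos v c a
  have hA := one_le_alphaV v (by omega : 1 ≤ n + 2)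
  calc hca v c a (Pca c a z)
      ≤ log (max (Ctilde v c a) (v z) ^ (n + 2) * alphaV v (n + 2)) :=
        log_le_log (lt_max_of_lt_left hCt) (max_Ctilde_abv_Pca_le c a z hv)
    _ = (n + 2) * hca v c a z + log (alphaV v (n + 2)) := by
        rw [log_mul (pow_ne_zero _ (lt_max_of_lt_left hCt).ne') (zero_lt_one.trans_le hA).ne',
          log_pow, hca]
        push_cast
        rfl

lemma hca_Pca_ge (hv : IsNonarchimedean v) :
    (n + 2) * hca v c a z
        + min (log (v ((n + 2 : ℕ) : K))⁻¹) (-(n + 1) * log (Ctilde v c a))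
      ≤ hca v c a (Pca c a z) := by
  have hCt := Ctilde_pos v c a
  unfold hca
  rcases le_or_gt (v z) (Ctilde v c a) with hz | hz
  · rw [max_eq_left hz]
    have hCtP := log_le_log hCt (le_max_left _ (v (Pca c a z)))
    have hmin := min_le_right (log (v ((n + 2 : ℕ) : K))⁻¹) (-(n + 1) * log (Ctilde v c a))
    linarith
  · have hD := abv_natCast_pos v (by omega : n + 2 ≠ 0)
    have hz0 : 0 < v z := hCt.trans hz
    have hP := abv_Pca_of_Ctilde_lt c a z hv hz
    have hlogP : log (v (Pca c a z)) = (n + 2) * log (v z) + log (v ((n + 2 : ℕ) : K))⁻¹ := by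
      rw [hP, div_eq_mul_inv, log_mul (by positivity) (by positivity), log_pow]
      push_cast
      rfl
    rw [max_eq_right hz.le]
    have hPmax := log_le_log (by rw [hP]; positivity) (le_max_right (Ctilde v c a) (v (Pca c a z)))
    have hmin := min_le_left (log (v ((n + 2 : ℕ) : K))⁻¹) (-(n + 1) * log (Ctilde v c a))
    linarith

end Height

theorem statement3_general {K : Type*} [Field K] [CharZero K]
    (v : AbsoluteValue K ℝ) (hv : ∀ x y : K, v (x + y) ≤ max (v x) (v y))
    (n : ℕ) (c : Fin n → K) (a : K) (z : K) :
    hca v c a (Pca c a z) / ((n : ℝ) + 2)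
        ≥ hca v c a z
          + min ((1 / ((n : ℝ) + 2)) * Real.log ((v (((n + 2 : ℕ) : K)))⁻¹))
              ((1 / ((n : ℝ) + 2) - 1) * Real.log (Ctilde v c a)) ∧
    hca v c a (Pca c a z) / ((n : ℝ) + 2)
        ≤ hca v c a z + (1 / ((n : ℝ) + 2)) * Real.log (alphaV v (n + 2)) := by
  have hd : (0 : ℝ) < n + 2 := by positivity
  constructor
  · have hmin : min ((1 / ((n : ℝ) + 2)) * Real.log ((v (((n + 2 : ℕ) : K)))⁻¹))
          ((1 / ((n : ℝ) + 2) - 1) * Real.log (Ctilde v c a)) =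
        min (Real.log (v ((n + 2 : ℕ) : K))⁻¹) (-(n + 1) * Real.log (Ctilde v c a)) / (n + 2) := by
      rw [← min_div_div_right hd.le]
      congr 1
      · field_simp
      · field_simp
        ring
    rw [ge_iff_le, hmin, le_div_iff₀ hd, add_mul, div_mul_cancel₀ _ hd.ne']
    linarith [hca_Pca_ge c a z hv]
  · rw [div_le_iff₀ hd, add_mul, mul_right_comm, one_div_mul_cancel hd.ne', one_mul]
    linarith [hca_Pca_le c a z hv]

/-- for every `(c,a)` and `z`,
`(1/d)·h_{c,a,v}(P_{c,a}(z)) ≥ h_{c,a,v}(z) + min{ (1/d)·log(|d|_v⁻¹), (1/d − 1)·log C̃_v(c,a) }`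
and `(1/d)·h_{c,a,v}(P_{c,a}(z)) ≤ h_{c,a,v}(z) + (1/d)·log α_v`, with `d = n + 2`. -/
theorem statement3 {K : Type*} [Field K] [IsAlgClosed K] [CharZero K]
    (v : AbsoluteValue K ℝ) (hv : ∀ x y : K, v (x + y) ≤ max (v x) (v y))
    (n : ℕ) (c : Fin n → K) (a : K) (z : K) :
    hca v c a (Pca c a z) / ((n : ℝ) + 2)
        ≥ hca v c a z
          + min ((1 / ((n : ℝ) + 2)) * Real.log ((v (((n + 2 : ℕ) : K)))⁻¹))
              ((1 / ((n : ℝ) + 2) - 1) * Real.log (Ctilde v c a)) ∧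
    hca v c a (Pca c a z) / ((n : ℝ) + 2)
        ≤ hca v c a z + (1 / ((n : ℝ) + 2)) * Real.log (alphaV v (n + 2)) :=
  statement3_general v hv n c a z
end
end

section
/- Let P(z) = Σ_{i=0}^d b_i z^i ∈ ℂ[z] be a polynomial of degree d (b_d ≠ 0) with b_1 = 0 (so 0 is a critical point of P), and suppose P has only simple critical points, i.e. the derivative P' has d−1 distinct roots (in particular b_2 ≠ 0). Set ζ_1(z) := P'(z) − 1 and ζ_2(z) := Σ_{i=2}^d (i−1) b_i z^i. If a_1, a_2 ∈ ℂ are such that the polynomial a_1·ζ_1 + a_2·ζ_2 has vanishing coefficients in degrees 1 and d, then a_1 = a_2 = 0. (This expresses that the slice Λ = {polynomials with leading coefficient 1/d and vanishing coefficient of z} of the space Poly_d of degree d polynomials meets the orbit of P under conjugation by affine maps transversely at P.) -/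
open Polynomial

noncomputable section

/-- `ζ_1 = P' − 1`, the tangent vector to the orbit of `P` coming from translations. -/
def zeta1 (Q : Polynomial ℂ) : Polynomial ℂ := Polynomial.derivative Q - 1

/-- `ζ_2 = ∑_{i=2}^d (i−1) b_i z^i`, the tangent vector coming from scalings. -/
def zeta2 (d : ℕ) (Q : Polynomial ℂ) : Polynomial ℂ :=
  ∑ i ∈ Finset.Icc 2 d, Polynomial.C (((i : ℂ) - 1) * Q.coeff i) * Polynomial.X ^ i

/-!
Coefficient `1` of `a₁ζ₁ + a₂ζ₂` is `2 a₁ b₂`, and coefficient `d` is `(d - 1) a₂ b_d`, since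
`ζ₁ = P' - 1` has degree `d - 1`. So the claim reduces to `b₂ ≠ 0`: otherwise `0` would be a
root of multiplicity at least `2` of `P'`, against the simplicity of the critical points.
-/

namespace Polynomial

theorem nodup_roots_of_card_roots_toFinset_eq_natDegree {K : Type*} [Field K] [IsAlgClosed K]
    [DecidableEq K] {p : K[X]} (h : p.roots.toFinset.card = p.natDegree) : p.roots.Nodup := by
  rwa [← Multiset.toFinset_card_eq_card_iff_nodup, IsAlgClosed.card_roots_eq_natDegree]

variable {R : Type*} [CommRing R] [IsDomain R]

theorem rootMultiplicity_le_one_of_nodup_roots {p : R[X]} (h : p.roots.Nodup) (a : R) :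
    p.rootMultiplicity a ≤ 1 := by
  classical
  rw [← count_roots]
  exact Multiset.nodup_iff_count_le_one.mp h a

theorem coeff_two_ne_zero_of_nodup_roots_derivative {p : R[X]} (hp' : derivative p ≠ 0)
    (hnodup : (derivative p).roots.Nodup) (h1 : p.coeff 1 = 0) : p.coeff 2 ≠ 0 := by
  intro h2
  have hdvd : X ^ 2 ∣ derivative p := X_pow_dvd_iff.mpr fun k hk => by
    interval_cases k <;> simp [coeff_derivative, h1, h2]
  have hmult := rootMultiplicity_le_one_of_nodup_roots hnodup 0
  rw [rootMultiplicity_le_iff hp'] at hmult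
  exact hmult (by simpa using hdvd)

end Polynomial

theorem zeta1_coeff_of_ne_zero (Q : ℂ[X]) {n : ℕ} (hn : n ≠ 0) :
    (zeta1 Q).coeff n = Q.coeff (n + 1) * (n + 1) := by
  simp [zeta1, coeff_derivative, coeff_one, hn]

theorem zeta2_coeff (d : ℕ) (Q : ℂ[X]) (n : ℕ) :
    (zeta2 d Q).coeff n = if n ∈ Finset.Icc 2 d then ((n : ℂ) - 1) * Q.coeff n else 0 := by
  simp only [zeta2, finsetSum_coeff, coeff_C_mul, coeff_X_pow, mul_ite, mul_one, mul_zero]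
  simp

/-- let `P(z) = ∑_{i=0}^d b_i z^i` be of degree `d` with `b_1 = 0` and with
only simple critical points (`P'` has `d−1` distinct roots). If `a_1·ζ_1 + a_2·ζ_2` has
vanishing coefficients in degrees `1` and `d`, then `a_1 = a_2 = 0`. -/
theorem statement12 (d : ℕ) (hd : 2 ≤ d) (Q : Polynomial ℂ)
    (hdeg : Q.natDegree = d) (hb1 : Q.coeff 1 = 0)
    (hsimple : Q.derivative.roots.toFinset.card = d - 1)
    (a1 a2 : ℂ)
    (h1 : (a1 • zeta1 Q + a2 • zeta2 d Q).coeff 1 = 0)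
    (hdc : (a1 • zeta1 Q + a2 • zeta2 d Q).coeff d = 0) :
    a1 = 0 ∧ a2 = 0 := by
  have hbd : Q.coeff d ≠ 0 := by
    rw [← hdeg, coeff_natDegree, leadingCoeff_ne_zero]
    rintro rfl
    simp at hdeg
    omega
  have hdegQ' : (derivative Q).natDegree = d - 1 := by rw [natDegree_derivative, hdeg]
  have hQ' : derivative Q ≠ 0 := ne_zero_of_natDegree_gt (n := 0) (by omega)
  have hb2 : Q.coeff 2 ≠ 0 := coeff_two_ne_zero_of_nodup_roots_derivative hQ'
    (nodup_roots_of_card_roots_toFinset_eq_natDegree (hdegQ' ▸ hsimple)) hb1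
  have ha1 : a1 * (Q.coeff 2 * 2) = 0 := by
    simpa [zeta1_coeff_of_ne_zero, zeta2_coeff, one_add_one_eq_two] using h1
  have ha2 : a2 * (((d : ℂ) - 1) * Q.coeff d) = 0 := by
    simpa [zeta1_coeff_of_ne_zero, zeta2_coeff, hd, coeff_eq_zero_of_natDegree_lt, hdeg,
      show d ≠ 0 by omega] using hdc
  have hd1 : (d : ℂ) - 1 ≠ 0 := sub_ne_zero.mpr (by exact_mod_cast (show d ≠ 1 by omega))
  exact ⟨by simpa [hb2] using ha1, by simpa [hd1, hbd] using ha2⟩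
end
end

section
/- For every 0 ≤ i ≤ d−2 and all integers m > n ≥ 0, the polynomial P_{c,a}^m(c_i) − P_{c,a}^n(c_i), viewed as an element of ℚ[c_1,…,c_{d-2},a], has total degree exactly d^m. -/
open MvPolynomial

noncomputable section

/-! ### Auxiliary: upper bound on degrees -/

lemma esymmMv_totalDegree_le (N k : ℕ) : (esymmMv N k).totalDegree ≤ k := by
  refine totalDegree_finsetSum_le fun s hs => ?_
  rw [Finset.mem_powersetCard] at hs
  calc (∏ i ∈ s, X (R := ℚ) i.castSucc).totalDegree
      ≤ ∑ i ∈ s, (X (R := ℚ) (Fin.castSucc i)).totalDegree := totalDegree_finset_prod _ _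
    _ = k := by simp [totalDegree_X, hs.2]

lemma critMv_totalDegree_le (N : ℕ) (i : Fin (N + 1)) : (critMv N i).totalDegree ≤ 1 := by
  rw [critMv]
  split
  · simp
  · rw [totalDegree_X]

lemma PMv_totalDegree_le (N : ℕ) {z : MvPolynomial (Fin (N + 1)) ℚ} {D : ℕ}
    (hD : 1 ≤ D) (hz : z.totalDegree ≤ D) : (PMv N z).totalDegree ≤ (N + 2) * D := by
  rw [PMv]
  refine (totalDegree_add _ _).trans (max_le ((totalDegree_add _ _).trans (max_le ?_ ?_)) ?_)
  · calc (C (1 / ((N : ℚ) + 2)) * z ^ (N + 2)).totalDegree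
        ≤ (C (R := ℚ) (1 / ((N : ℚ) + 2))).totalDegree + (z ^ (N + 2)).totalDegree :=
          totalDegree_mul _ _
      _ ≤ 0 + (N + 2) * z.totalDegree := by
          gcongr
          · exact (totalDegree_C _).le
          · exact totalDegree_pow _ _
      _ ≤ (N + 2) * D := by rw [zero_add]; gcongr
  · refine totalDegree_finsetSum_le fun j hj => ?_
    rw [Finset.mem_Icc] at hj
    calc (C ((-1 : ℚ) ^ (N + 2 - j) / (j : ℚ)) * esymmMv N (N + 2 - j) * z ^ j).totalDegree
        ≤ (C ((-1 : ℚ) ^ (N + 2 - j) / (j : ℚ)) * esymmMv N (N + 2 - j)).totalDegree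
            + (z ^ j).totalDegree := totalDegree_mul _ _
      _ ≤ ((C (R := ℚ) ((-1 : ℚ) ^ (N + 2 - j) / (j : ℚ))).totalDegree
            + (esymmMv N (N + 2 - j)).totalDegree) + j * z.totalDegree := by
          gcongr
          · exact totalDegree_mul _ _
          · exact totalDegree_pow _ _
      _ ≤ (0 + (N + 2 - j)) + j * D := by
          gcongr
          · exact (totalDegree_C _).le
          · exact esymmMv_totalDegree_le _ _
      _ ≤ (N + 2 - j) * D + j * D := by
          rw [zero_add]
          gcongr
          exact Nat.le_mul_of_pos_right _ hD
      _ ≤ (N + 2) * D := by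
          rw [← add_mul]
          exact Nat.mul_le_mul_right D (by omega)
  · calc ((X (R := ℚ) (Fin.last N)) ^ (N + 2)).totalDegree
        ≤ (N + 2) * (X (R := ℚ) (Fin.last N)).totalDegree := totalDegree_pow _ _
      _ = (N + 2) * 1 := by rw [totalDegree_X]
      _ ≤ (N + 2) * D := by gcongr

lemma iter_totalDegree_le (N : ℕ) (i : Fin (N + 1)) (k : ℕ) :
    ((PMv N)^[k] (critMv N i)).totalDegree ≤ (N + 2) ^ k := by
  induction k with
  | zero => simpa using critMv_totalDegree_le N i
  | succ k ih =>
    rw [Function.iterate_succ_apply', pow_succ']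
    exact PMv_totalDegree_le N (Nat.one_le_pow _ _ (by omega)) ih

/-! ### Auxiliary: the specialization `c = 0` -/

def psiMv (N : ℕ) : MvPolynomial (Fin (N + 1)) ℚ →+* Polynomial ℚ :=
  eval₂Hom (Polynomial.C : ℚ →+* Polynomial ℚ)
    (fun v => if v = Fin.last N then Polynomial.X else 0)

lemma coeff_psiMv (N : ℕ) (p : MvPolynomial (Fin (N + 1)) ℚ) (k : ℕ) :
    (psiMv N p).coeff k = p.coeff (Finsupp.single (Fin.last N) k) := by
  conv_lhs => rw [p.as_sum]
  rw [map_sum, Polynomial.finset_sum_coeff]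
  conv_rhs => rw [p.as_sum]
  rw [MvPolynomial.coeff_sum]
  refine Finset.sum_congr rfl fun s _ => ?_
  rw [psiMv, eval₂Hom_monomial, MvPolynomial.coeff_monomial]
  by_cases hsupp : ∀ v, s v ≠ 0 → v = Fin.last N
  · have hs : s = Finsupp.single (Fin.last N) (s (Fin.last N)) := by
      ext v
      by_cases hv : v = Fin.last N
      · subst hv; simp
      · rw [Finsupp.single_apply, if_neg (fun h => hv h.symm)]
        by_contra h
        exact hv (hsupp v h)
    rw [hs, Finsupp.prod_single_index (by simp)]
    rw [if_pos rfl, Polynomial.coeff_C_mul, Polynomial.coeff_X_pow]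
    by_cases hk : s (Fin.last N) = k
    · rw [if_pos hk.symm, mul_one, if_pos (by rw [hk])]
    · rw [if_neg (Ne.symm hk), mul_zero, if_neg (fun h =>
        hk (by simpa using congrArg (fun f => f (Fin.last N)) h))]
  · push_neg at hsupp
    obtain ⟨v, hv0, hv⟩ := hsupp
    have : s.prod (fun n e => (if n = Fin.last N then Polynomial.X else (0 : Polynomial ℚ)) ^ e)
        = 0 := by
      rw [Finsupp.prod]
      refine Finset.prod_eq_zero (Finsupp.mem_support_iff.mpr hv0) ?_
      rw [if_neg hv, zero_pow hv0]
    rw [this, mul_zero, Polynomial.coeff_zero, if_neg]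
    intro h
    apply hv0
    rw [h, Finsupp.single_apply, if_neg (fun h' => hv h'.symm)]

lemma psiMv_X_castSucc (N : ℕ) (v : Fin N) : psiMv N (X v.castSucc) = 0 := by
  rw [psiMv, eval₂Hom_X', if_neg (Fin.castSucc_lt_last v).ne]

lemma psiMv_esymm (N k : ℕ) (hk : 1 ≤ k) : psiMv N (esymmMv N k) = 0 := by
  rw [esymmMv, map_sum]
  refine Finset.sum_eq_zero fun s hs => ?_
  rw [Finset.mem_powersetCard] at hs
  obtain ⟨v, hv⟩ := Finset.card_pos.mp (by omega : 0 < s.card)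
  rw [map_prod]
  exact Finset.prod_eq_zero hv (psiMv_X_castSucc N v)

lemma psiMv_crit (N : ℕ) (i : Fin (N + 1)) : psiMv N (critMv N i) = 0 := by
  rw [critMv]
  split
  · simp
  · exact psiMv_X_castSucc N _

def QP (N : ℕ) (q : Polynomial ℚ) : Polynomial ℚ :=
  Polynomial.C (1 / ((N : ℚ) + 2)) * q ^ (N + 2) + Polynomial.X ^ (N + 2)

lemma psiMv_PMv (N : ℕ) (z : MvPolynomial (Fin (N + 1)) ℚ) :
    psiMv N (PMv N z) = QP N (psiMv N z) := by
  rw [PMv, QP, map_add, map_add, map_mul, map_pow, map_pow, map_sum]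
  have hC : ∀ r : ℚ, psiMv N (C r) = Polynomial.C r := fun r => by
    rw [psiMv, eval₂Hom_C]
  have hX : psiMv N (X (Fin.last N)) = Polynomial.X := by
    rw [psiMv, eval₂Hom_X', if_pos rfl]
  rw [hC, hX]
  congr 1
  rw [add_eq_left]
  refine Finset.sum_eq_zero fun j hj => ?_
  rw [Finset.mem_Icc] at hj
  rw [map_mul, map_mul, psiMv_esymm N _ (by omega), mul_zero, zero_mul]

lemma psiMv_iter (N : ℕ) (i : Fin (N + 1)) (k : ℕ) :
    psiMv N ((PMv N)^[k] (critMv N i)) = (QP N)^[k] 0 := by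
  induction k with
  | zero => simpa using psiMv_crit N i
  | succ k ih =>
    rw [Function.iterate_succ_apply', Function.iterate_succ_apply', psiMv_PMv, ih]

lemma QP_iter_natDegree (N : ℕ) : ∀ k, 1 ≤ k →
    ((QP N)^[k] 0).natDegree = (N + 2) ^ k ∧ (QP N)^[k] 0 ≠ 0 := by
  have hc : (1 / ((N : ℚ) + 2)) ≠ 0 := by positivity
  intro k
  induction k with
  | zero => omega
  | succ k ih =>
    intro _
    rw [Function.iterate_succ_apply']
    rcases Nat.eq_zero_or_pos k with rfl | hk
    · have : QP N ((QP N)^[0] 0) = Polynomial.X ^ (N + 2) := by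
        simp [QP, zero_pow]
      rw [this]
      constructor
      · simp [Polynomial.natDegree_X_pow]
      · exact pow_ne_zero _ Polynomial.X_ne_zero
    · obtain ⟨hdeg, hne⟩ := ih hk
      set q := (QP N)^[k] 0 with hq
      have hd2 : 1 ≤ (N + 2) ^ k := Nat.one_le_pow _ _ (by omega)
      have h1 : (Polynomial.C (1 / ((N : ℚ) + 2)) * q ^ (N + 2)).natDegree
          = (N + 2) ^ (k + 1) := by
        rw [Polynomial.natDegree_C_mul hc, Polynomial.natDegree_pow, hdeg, pow_succ']
      have h2 : (Polynomial.X ^ (N + 2) : Polynomial ℚ).natDegree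
          < (Polynomial.C (1 / ((N : ℚ) + 2)) * q ^ (N + 2)).natDegree := by
        rw [h1, Polynomial.natDegree_X_pow]
        have ha : (N + 2) ^ 2 ≤ (N + 2) ^ (k + 1) := Nat.pow_le_pow_right (by omega) (by omega)
        have hb : N + 2 < (N + 2) ^ 2 := by rw [pow_two]; nlinarith
        omega
      have hdeg' : (QP N q).natDegree = (N + 2) ^ (k + 1) := by
        rw [QP, Polynomial.natDegree_add_eq_left_of_natDegree_lt h2, h1]
      refine ⟨hdeg', fun h0 => ?_⟩
      have : (0 : Polynomial ℚ).natDegree = (N + 2) ^ (k + 1) := by rw [← h0, hdeg']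
      rw [Polynomial.natDegree_zero] at this
      have := Nat.one_le_pow (k + 1) (N + 2) (by omega)
      omega

/-- for every `0 ≤ i ≤ d-2` and all integers `m > n ≥ 0`, the polynomial
`P_{c,a}^m(c_i) - P_{c,a}^n(c_i) ∈ ℚ[c_1, …, c_{d-2}, a]` has total degree exactly `d^m`
(where `d = N + 2`). -/
theorem statement13 (N : ℕ) (i : Fin (N + 1)) (m n : ℕ) (hmn : n < m) :
    ((PMv N)^[m] (critMv N i) - (PMv N)^[n] (critMv N i)).totalDegree = (N + 2) ^ m := by
  set p := (PMv N)^[m] (critMv N i) - (PMv N)^[n] (critMv N i) with hp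
  have hub : p.totalDegree ≤ (N + 2) ^ m := by
    refine (totalDegree_sub _ _).trans (max_le (iter_totalDegree_le N i m) ?_)
    exact (iter_totalDegree_le N i n).trans
      (Nat.pow_le_pow_right (by omega) (by omega))
  have hm := QP_iter_natDegree N m (by omega)
  have hsub : ((QP N)^[m] 0 - (QP N)^[n] 0).natDegree = (N + 2) ^ m := by
    rw [Polynomial.natDegree_sub_eq_left_of_natDegree_lt, hm.1]
    rw [hm.1]
    rcases Nat.eq_zero_or_pos n with rfl | hn
    · simp
    · rw [(QP_iter_natDegree N n hn).1]
      exact Nat.pow_lt_pow_right (by omega) hmn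
  have hne : (QP N)^[m] 0 - (QP N)^[n] 0 ≠ 0 := by
    intro h
    rw [h, Polynomial.natDegree_zero] at hsub
    have := Nat.one_le_pow m (N + 2) (by omega)
    omega
  have hcoeff : p.coeff (Finsupp.single (Fin.last N) ((N + 2) ^ m)) ≠ 0 := by
    rw [← coeff_psiMv, hp, map_sub, psiMv_iter, psiMv_iter, ← hsub]
    exact Polynomial.leadingCoeff_ne_zero.mpr hne
  have hlb := le_totalDegree (p := p) (mem_support_iff.mpr hcoeff)
  rw [Finsupp.sum_single_index rfl] at hlb
  omega
end
end
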